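/- arXiv:1304.7934 — 3 statements merged into one kernel-verified Lean document; each statement's English description precedes it below -/
import Mathlib

section
/- Under the standing assumption, let (φ, 𝒳) be a Lebesgue extension of φ₀. Then for every X ∈ 𝒳 and every α > 0, lim_{N→∞} φ̂(α|X| · 1_{{|X| > N}}) = lim_{N→∞} φ(α|X| · 1_{{|X| > N}}) = 0. -/
/-!
The tails `α|X| 1_{|X| > N}` are dominated by `α|X| ∈ 𝒳` and tend to `0` pointwise, so the
Lebesgue property of `φ` gives `φ(tail) → φ(0) = φ₀(0) = 0`. For `φ̂` we squeeze
`0 ≤ φ̂(Y) ≤ φ(Y)` for `0 ≤ Y ∈ 𝒳`.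

The upper bound comes from testing `φ₀*(Z)` against the truncations `min Y m ∈ L^∞`, which
satisfy `φ₀(min Y m) ≤ φ(Y)`, and letting `m → ∞` by monotone convergence.

The lower bound needs some `Z ∈ dom φ₀*` with `Z ≥ 0` and `φ₀*(Z) ≤ 0`, i.e. a subgradient of
`φ₀` at `0` that is a density. Hahn–Banach, applied to the sublinear directional derivative
`φ₀'(0; ·)`, gives a linear `ℓ ≤ φ₀` on `L^∞`, which is positive by monotonicity. The Lebesgue
property of `φ₀` makes `s ↦ ℓ(1_s)` continuous at `∅`, hence a finite measure `ν ≪ μ`, and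
`Z = dν/dμ` works because `∫ X dν ≤ φ₀(X)` passes from simple functions to `L^∞`, again by
the Lebesgue property.
-/

open MeasureTheory Filter Topology
open scoped ENNReal

noncomputable section

namespace MaxLebExt

variable {Ω : Type*} [MeasurableSpace Ω]

/-- Membership in `L^∞(μ)`. -/
def MemLinf (μ : Measure Ω) (X : Ω → ℝ) : Prop :=
  MemLp X ⊤ μ

/-- Extended-real-valued expectation `𝔼[f] ∈ [-∞,∞]`, defined as the integral of the
positive part minus the integral of the negative part. -/
def eE (μ : Measure Ω) (f : Ω → ℝ) : EReal :=
  ((∫⁻ ω, ENNReal.ofReal (f ω) ∂μ : ℝ≥0∞) : EReal) -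
    ((∫⁻ ω, ENNReal.ofReal (-f ω) ∂μ : ℝ≥0∞) : EReal)

/-- The conjugate `φ*(Z) = sup_{X ∈ L^∞} (𝔼[XZ] - φ(X)) ∈ (-∞,∞]` of a function `φ`
defined (at least) on `L^∞`. -/
def conj (μ : Measure Ω) (φ : (Ω → ℝ) → ℝ) (Z : Ω → ℝ) : EReal :=
  ⨆ X : {X : Ω → ℝ // MemLinf μ X}, (((∫ ω, X.1 ω * Z ω ∂μ) - φ X.1 : ℝ) : EReal)

/-- `Z ∈ dom φ* = {Z ∈ L¹ : φ*(Z) < ∞}`. -/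
def MemDom (μ : Measure Ω) (φ : (Ω → ℝ) → ℝ) (Z : Ω → ℝ) : Prop :=
  Integrable Z μ ∧ conj μ φ Z < ⊤

/-- `X ∈ 𝒟₀ = {X ∈ L⁰ : X⁻ Z ∈ L¹ for all Z ∈ dom φ*}`. -/
def MemD0 (μ : Measure Ω) (φ : (Ω → ℝ) → ℝ) (X : Ω → ℝ) : Prop :=
  AEStronglyMeasurable X μ ∧
    ∀ Z : Ω → ℝ, MemDom μ φ Z → Integrable (fun ω => max (-(X ω)) 0 * Z ω) μ

/-- The canonical extension `φ̂(X) = sup_{Z ∈ dom φ*} (𝔼[XZ] - φ*(Z))`. -/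
def hatphi (μ : Measure Ω) (φ : (Ω → ℝ) → ℝ) (X : Ω → ℝ) : EReal :=
  ⨆ Z : {Z : Ω → ℝ // MemDom μ φ Z},
    (eE μ (fun ω => X ω * Z.1 ω) - conj μ φ Z.1)

/-- The truncated tail `α|X| 1_{{|X| > N}}`. -/
def tailFn (X : Ω → ℝ) (α : ℝ) (N : ℕ) : Ω → ℝ :=
  Set.indicator {ω | (N : ℝ) < |X ω|} fun ω => α * |X ω|

/-- `X ∈ M^φ̂_u`. -/
def MemMu (μ : Measure Ω) (φ : (Ω → ℝ) → ℝ) (X : Ω → ℝ) : Prop :=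
  AEStronglyMeasurable X μ ∧
    ∀ α : ℝ, 0 < α →
      Tendsto (fun N : ℕ => hatphi μ φ (tailFn X α N)) atTop (𝓝 (0 : EReal))

/-- `X ∈ M^φ̂` (the Orlicz heart of `φ̂`). -/
def MemM (μ : Measure Ω) (φ : (Ω → ℝ) → ℝ) (X : Ω → ℝ) : Prop :=
  AEStronglyMeasurable X μ ∧
    ∀ α : ℝ, 0 < α → hatphi μ φ (fun ω => α * |X ω|) < ⊤

/-- A finite monotone convex function on `L^∞`, compatible with a.e. equality. -/
structure IsMCLinf (μ : Measure Ω) (φ : (Ω → ℝ) → ℝ) : Prop where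
  congr : ∀ X Y : Ω → ℝ, MemLinf μ X → MemLinf μ Y → X =ᵐ[μ] Y → φ X = φ Y
  mono : ∀ X Y : Ω → ℝ, MemLinf μ X → MemLinf μ Y → X ≤ᵐ[μ] Y → φ X ≤ φ Y
  convex : ∀ X Y : Ω → ℝ, MemLinf μ X → MemLinf μ Y → ∀ t : ℝ, 0 ≤ t → t ≤ 1 →
    φ (fun ω => t * X ω + (1 - t) * Y ω) ≤ t * φ X + (1 - t) * φ Y

/-- The Lebesgue property on `L^∞`. -/
def LebesgueLinf (μ : Measure Ω) (φ : (Ω → ℝ) → ℝ) : Prop :=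
  ∀ (X : ℕ → Ω → ℝ) (X₀ : Ω → ℝ), (∀ n, MemLinf μ (X n)) → MemLinf μ X₀ →
    (∃ C : ℝ, ∀ n, ∀ᵐ ω ∂μ, |X n ω| ≤ C) →
    (∀ᵐ ω ∂μ, Tendsto (fun n => X n ω) atTop (𝓝 (X₀ ω))) →
    Tendsto (fun n => φ (X n)) atTop (𝓝 (φ X₀))

/-- The Fatou property on `L^∞`. -/
def FatouLinf (μ : Measure Ω) (φ : (Ω → ℝ) → ℝ) : Prop :=
  ∀ (X : ℕ → Ω → ℝ) (X₀ : Ω → ℝ), (∀ n, MemLinf μ (X n)) → MemLinf μ X₀ →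
    (∃ C : ℝ, ∀ n, ∀ᵐ ω ∂μ, |X n ω| ≤ C) →
    (∀ᵐ ω ∂μ, Tendsto (fun n => X n ω) atTop (𝓝 (X₀ ω))) →
    φ X₀ ≤ liminf (fun n => φ (X n)) atTop

/-- Standing assumption: `φ₀` is a finite monotone convex function on `L^∞` with the
Lebesgue property and `φ₀(0) = 0`. -/
structure Standing (μ : Measure Ω) (φ₀ : (Ω → ℝ) → ℝ) : Prop where
  mc : IsMCLinf μ φ₀
  leb : LebesgueLinf μ φ₀
  zero : φ₀ 0 = 0

/-- A solid vector subspace (ideal) of `L⁰`. -/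
structure IsSolidSpace (μ : Measure Ω) (S : Set (Ω → ℝ)) : Prop where
  aesm : ∀ X ∈ S, AEStronglyMeasurable X μ
  zero : (0 : Ω → ℝ) ∈ S
  add : ∀ X ∈ S, ∀ Y ∈ S, X + Y ∈ S
  smul : ∀ c : ℝ, ∀ X ∈ S, (fun ω => c * X ω) ∈ S
  solid : ∀ X : Ω → ℝ, AEStronglyMeasurable X μ → ∀ Y ∈ S,
    (∀ᵐ ω ∂μ, |X ω| ≤ |Y ω|) → X ∈ S

/-- A finite monotone convex function on a solid space `S`. -/
structure IsMCOn (μ : Measure Ω) (S : Set (Ω → ℝ)) (ψ : (Ω → ℝ) → ℝ) : Prop where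
  congr : ∀ X ∈ S, ∀ Y ∈ S, X =ᵐ[μ] Y → ψ X = ψ Y
  mono : ∀ X ∈ S, ∀ Y ∈ S, X ≤ᵐ[μ] Y → ψ X ≤ ψ Y
  convex : ∀ X ∈ S, ∀ Y ∈ S, ∀ t : ℝ, 0 ≤ t → t ≤ 1 →
    ψ (fun ω => t * X ω + (1 - t) * Y ω) ≤ t * ψ X + (1 - t) * ψ Y

/-- The Lebesgue property on a solid space `S`. -/
def LebesgueOn (μ : Measure Ω) (S : Set (Ω → ℝ)) (ψ : (Ω → ℝ) → ℝ) : Prop :=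
  ∀ (X : ℕ → Ω → ℝ) (X₀ Y : Ω → ℝ), (∀ n, X n ∈ S) → X₀ ∈ S → Y ∈ S →
    (∀ n, ∀ᵐ ω ∂μ, |X n ω| ≤ Y ω) →
    (∀ᵐ ω ∂μ, Tendsto (fun n => X n ω) atTop (𝓝 (X₀ ω))) →
    Tendsto (fun n => ψ (X n)) atTop (𝓝 (ψ X₀))

/-- The Fatou property on a solid space `S`. -/
def FatouOn (μ : Measure Ω) (S : Set (Ω → ℝ)) (ψ : (Ω → ℝ) → ℝ) : Prop :=
  ∀ (X : ℕ → Ω → ℝ) (X₀ Y : Ω → ℝ), (∀ n, X n ∈ S) → X₀ ∈ S → Y ∈ S →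
    (∀ n, ∀ᵐ ω ∂μ, |X n ω| ≤ Y ω) →
    (∀ᵐ ω ∂μ, Tendsto (fun n => X n ω) atTop (𝓝 (X₀ ω))) →
    ψ X₀ ≤ liminf (fun n => ψ (X n)) atTop

/-- A proper monotone convex function with values in `(-∞,∞]` on a solid space `S`. -/
structure IsMCOnE (μ : Measure Ω) (S : Set (Ω → ℝ)) (φ : (Ω → ℝ) → EReal) : Prop where
  congr : ∀ X ∈ S, ∀ Y ∈ S, X =ᵐ[μ] Y → φ X = φ Y
  mono : ∀ X ∈ S, ∀ Y ∈ S, X ≤ᵐ[μ] Y → φ X ≤ φ Y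
  convex : ∀ X ∈ S, ∀ Y ∈ S, ∀ t : ℝ, 0 < t → t < 1 →
    φ (fun ω => t * X ω + (1 - t) * Y ω) ≤ (t : EReal) * φ X + ((1 - t : ℝ) : EReal) * φ Y
  ne_bot : ∀ X ∈ S, φ X ≠ ⊥
  exists_ne_top : ∃ X ∈ S, φ X ≠ ⊤

/-- The Lebesgue property on a solid space `S` for an extended-real-valued function. -/
def LebesgueOnE (μ : Measure Ω) (S : Set (Ω → ℝ)) (φ : (Ω → ℝ) → EReal) : Prop :=
  ∀ (X : ℕ → Ω → ℝ) (X₀ Y : Ω → ℝ), (∀ n, X n ∈ S) → X₀ ∈ S → Y ∈ S →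
    (∀ n, ∀ᵐ ω ∂μ, |X n ω| ≤ Y ω) →
    (∀ᵐ ω ∂μ, Tendsto (fun n => X n ω) atTop (𝓝 (X₀ ω))) →
    Tendsto (fun n => φ (X n)) atTop (𝓝 (φ X₀))

/-- `(φ, S)` is a Lebesgue extension of `(φ₀, L^∞)`. -/
structure IsLebExt (μ : Measure Ω) (φ₀ : (Ω → ℝ) → ℝ)
    (S : Set (Ω → ℝ)) (φ : (Ω → ℝ) → EReal) : Prop where
  solid : IsSolidSpace μ S
  linf_mem : ∀ X : Ω → ℝ, MemLinf μ X → X ∈ S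
  mc : IsMCOnE μ S φ
  leb : LebesgueOnE μ S φ
  restrict : ∀ X : Ω → ℝ, MemLinf μ X → φ X = (φ₀ X : EReal)

/-- The gauge (Luxemburg-type) functional `‖X‖_φ̂ = inf {λ > 0 : φ̂(|X|/λ) ≤ 1}`,
with `inf ∅ = +∞`. -/
def gauge (μ : Measure Ω) (φ : (Ω → ℝ) → ℝ) (X : Ω → ℝ) : EReal :=
  sInf {l : EReal | ∃ r : ℝ, 0 < r ∧ l = (r : EReal) ∧
    hatphi μ φ (fun ω => |X ω| / r) ≤ 1}

section Tail

omit [MeasurableSpace Ω] in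
lemma tailFn_nonneg (X : Ω → ℝ) {α : ℝ} (hα : 0 ≤ α) (N : ℕ) (ω : Ω) :
    0 ≤ tailFn X α N ω :=
  Set.indicator_nonneg (fun _ _ => mul_nonneg hα (abs_nonneg _)) ω

omit [MeasurableSpace Ω] in
lemma tailFn_le (X : Ω → ℝ) {α : ℝ} (hα : 0 ≤ α) (N : ℕ) (ω : Ω) :
    tailFn X α N ω ≤ α * |X ω| :=
  Set.indicator_le_self' (fun _ _ => mul_nonneg hα (abs_nonneg _)) ω

omit [MeasurableSpace Ω] in
lemma abs_tailFn_le (X : Ω → ℝ) {α : ℝ} (hα : 0 ≤ α) (N : ℕ) (ω : Ω) :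
    |tailFn X α N ω| ≤ α * |X ω| := by
  rw [abs_of_nonneg (tailFn_nonneg X hα N ω)]
  exact tailFn_le X hα N ω

omit [MeasurableSpace Ω] in
lemma tendsto_tailFn_zero (X : Ω → ℝ) (α : ℝ) (ω : Ω) :
    Tendsto (fun N : ℕ => tailFn X α N ω) atTop (𝓝 0) :=
  tendsto_atTop_of_eventually_const (i₀ := ⌈|X ω|⌉₊) fun _ hN =>
    Set.indicator_of_notMem (not_lt.2 ((Nat.le_ceil _).trans (Nat.cast_le.2 hN))) _

lemma IsSolidSpace.mul_abs_mem {μ : Measure Ω} {S : Set (Ω → ℝ)} (hS : IsSolidSpace μ S)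
    {X : Ω → ℝ} (hX : X ∈ S) (α : ℝ) : (fun ω => α * |X ω|) ∈ S :=
  hS.smul α _ (hS.solid _ (hS.aesm X hX).norm X hX (.of_forall fun _ => (abs_abs _).le))

lemma IsSolidSpace.tailFn_mem {μ : Measure Ω} {S : Set (Ω → ℝ)} (hS : IsSolidSpace μ S)
    {X : Ω → ℝ} (hX : X ∈ S) {α : ℝ} (hα : 0 ≤ α) (N : ℕ) : tailFn X α N ∈ S := by
  refine hS.solid _ ?_ _ (hS.mul_abs_mem hX α) (.of_forall fun ω => ?_)
  · -- `tailFn X α N` is this function composed with `X`.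
    have hg : Measurable (Set.indicator {x : ℝ | (N : ℝ) < |x|} fun x => α * |x|) :=
      (measurable_const.mul measurable_norm).indicator
        (measurableSet_lt measurable_const measurable_norm)
    exact (hg.comp_aemeasurable (hS.aesm X hX).aemeasurable).aestronglyMeasurable
  · rw [abs_of_nonneg (mul_nonneg hα (abs_nonneg _))]
    exact abs_tailFn_le X hα N ω

end Tail

section UpperBound

variable {μ : Measure Ω}

lemma eE_eq_integral {f : Ω → ℝ} (hf : Integrable f μ) : eE μ f = ∫ ω, f ω ∂μ := by
  rw [integral_eq_lintegral_pos_part_sub_lintegral_neg_part hf, EReal.coe_sub,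
    EReal.coe_ennreal_toReal hf.lintegral_lt_top.ne,
    EReal.coe_ennreal_toReal (x := ∫⁻ ω, .ofReal (-f ω) ∂μ) hf.neg.lintegral_lt_top.ne]
  rfl

lemma tendsto_lintegral_ofReal_min_mul {Y Z : Ω → ℝ} (hY : AEMeasurable Y μ)
    (hY0 : ∀ ω, 0 ≤ Y ω) (hZ : AEMeasurable Z μ) :
    Tendsto (fun m : ℕ => ∫⁻ ω, ENNReal.ofReal (min (Y ω) m * Z ω) ∂μ) atTop
      (𝓝 (∫⁻ ω, ENNReal.ofReal (Y ω * Z ω) ∂μ)) := by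
  simp_rw [fun ω (m : ℕ) z => ENNReal.ofReal_mul (p := min (Y ω) m) (q := z)
    (le_min (hY0 ω) m.cast_nonneg), fun ω z => ENNReal.ofReal_mul (q := z) (hY0 ω)]
  refine lintegral_tendsto_of_tendsto_of_monotone
    (fun m => (hY.min aemeasurable_const).ennreal_ofReal.mul hZ.ennreal_ofReal)
    (.of_forall fun ω m m' hm => ?_) (.of_forall fun ω => ?_)
  · dsimp only
    gcongr
  · refine tendsto_atTop_of_eventually_const (i₀ := ⌈Y ω⌉₊) fun m hm => ?_
    rw [min_eq_left ((Nat.le_ceil _).trans (Nat.cast_le.2 hm))]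

lemma memLinf_min_natCast {Y : Ω → ℝ} (hY : AEStronglyMeasurable Y μ) (hY0 : ∀ ω, 0 ≤ Y ω)
    (m : ℕ) : MemLinf μ (fun ω => min (Y ω) m) :=
  memLp_top_of_bound (hY.aemeasurable.min aemeasurable_const).aestronglyMeasurable m
    (.of_forall fun ω => by
      rw [Real.norm_of_nonneg (le_min (hY0 ω) m.cast_nonneg)]
      exact min_le_right _ _)

lemma eE_mul_le_of_forall_integral_min_mul_le {Y Z : Ω → ℝ} (hY : AEStronglyMeasurable Y μ)
    (hY0 : ∀ ω, 0 ≤ Y ω) (hZ : Integrable Z μ) {r : ℝ}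
    (hr : ∀ m : ℕ, ∫ ω, min (Y ω) m * Z ω ∂μ ≤ r) : eE μ (fun ω => Y ω * Z ω) ≤ r := by
  set B := ∫⁻ ω, ENNReal.ofReal (-(Y ω * Z ω)) ∂μ
  have hB : ∀ m : ℕ, ∫⁻ ω, ENNReal.ofReal (-(min (Y ω) m * Z ω)) ∂μ ≤ B := fun m =>
    lintegral_mono fun ω => by
      rw [← mul_neg, ← mul_neg, ENNReal.ofReal_mul (le_min (hY0 ω) m.cast_nonneg),
        ENNReal.ofReal_mul (hY0 ω)]
      gcongr
      exact min_le_left _ _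
  have hbound : ∀ m : ℕ,
      ((∫⁻ ω, ENNReal.ofReal (min (Y ω) m * Z ω) ∂μ : ℝ≥0∞) : EReal) ≤ r + B := by
    intro m
    have hint : Integrable (fun ω => min (Y ω) m * Z ω) μ :=
      hZ.mul_of_top_right (memLinf_min_natCast hY hY0 m)
    have := (eE_eq_integral hint).trans_le (EReal.coe_le_coe_iff.2 (hr m))
    rw [eE, EReal.sub_le_iff_le_add (.inl (EReal.coe_ennreal_ne_bot _))
      (.inr (EReal.coe_ne_bot _))] at this
    exact this.trans (add_le_add_right (EReal.coe_ennreal_le_coe_ennreal_iff.2 (hB m)) _)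
  have hlim := le_of_tendsto' ((continuous_coe_ennreal_ereal.tendsto _).comp
    (tendsto_lintegral_ofReal_min_mul hY.aemeasurable hY0 hZ.aemeasurable)) hbound
  rw [eE, EReal.sub_le_iff_le_add (.inl (EReal.coe_ennreal_ne_bot _)) (.inr (EReal.coe_ne_bot _))]
  exact hlim

variable {φ₀ : (Ω → ℝ) → ℝ}

lemma coe_integral_mul_sub_le_conj {X : Ω → ℝ} (hX : MemLinf μ X) (Z : Ω → ℝ) :
    (((∫ ω, X ω * Z ω ∂μ) - φ₀ X : ℝ) : EReal) ≤ conj μ φ₀ Z :=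
  le_iSup (fun X : {X : Ω → ℝ // MemLinf μ X} => (((∫ ω, X.1 ω * Z ω ∂μ) - φ₀ X.1 : ℝ) : EReal))
    ⟨X, hX⟩

lemma conj_ne_bot (Z : Ω → ℝ) : conj μ φ₀ Z ≠ ⊥ :=
  ne_bot_of_le_ne_bot (EReal.coe_ne_bot _) (coe_integral_mul_sub_le_conj MemLp.zero Z)

lemma IsLebExt.hatphi_le {S : Set (Ω → ℝ)} {φ : (Ω → ℝ) → EReal}
    (hext : IsLebExt μ φ₀ S φ) {Y : Ω → ℝ} (hY : Y ∈ S) (hY0 : ∀ ω, 0 ≤ Y ω) :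
    hatphi μ φ₀ Y ≤ φ Y := by
  refine iSup_le fun ⟨Z, hZ⟩ => ?_
  rcases eq_or_ne (φ Y) ⊤ with htop | htop
  · exact htop ▸ le_top
  rw [← EReal.coe_toReal htop (hext.mc.ne_bot Y hY),
    ← EReal.coe_toReal hZ.2.ne (conj_ne_bot Z),
    EReal.sub_le_iff_le_add (.inl (EReal.coe_ne_bot _)) (.inr (EReal.coe_ne_bot _)),
    ← EReal.coe_add]
  have hYS := hext.solid.aesm Y hY
  refine eE_mul_le_of_forall_integral_min_mul_le hYS hY0 hZ.1 fun m => ?_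
  have hYm := memLinf_min_natCast hYS hY0 m
  have hconj : ∫ ω, min (Y ω) m * Z ω ∂μ - φ₀ (fun ω => min (Y ω) m) ≤ (conj μ φ₀ Z).toReal :=
    EReal.coe_le_coe_iff.1 <| (coe_integral_mul_sub_le_conj hYm Z).trans_eq
      (EReal.coe_toReal hZ.2.ne (conj_ne_bot Z)).symm
  have hφ : φ₀ (fun ω => min (Y ω) m) ≤ (φ Y).toReal := by
    refine EReal.coe_le_coe_iff.1 ?_
    rw [← hext.restrict _ hYm, EReal.coe_toReal htop (hext.mc.ne_bot Y hY)]
    exact hext.mc.mono _ (hext.linf_mem _ hYm) Y hY (.of_forall fun ω => min_le_left _ _)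
  linarith

end UpperBound

section Subgradient

variable {μ : Measure Ω} {φ₀ : (Ω → ℝ) → ℝ}

variable (μ) in
def linfSubmodule : Submodule ℝ (Ω → ℝ) where
  carrier := {X | MemLinf μ X}
  add_mem' hX hY := hX.add hY
  zero_mem' := MemLp.zero
  smul_mem' c _ hX := hX.const_smul c

lemma IsMCLinf.convexOn_smul (hφ : IsMCLinf μ φ₀) {f : Ω → ℝ} (hf : MemLinf μ f) :
    ConvexOn ℝ Set.univ fun t : ℝ => φ₀ (t • f) := by
  refine ⟨convex_univ, fun x _ y _ a b ha hb hab => ?_⟩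
  obtain rfl : b = 1 - a := by linarith
  have hconv := hφ.convex _ _ (hf.const_smul x) (hf.const_smul y) a ha (by linarith)
  have hfun : (a • x + (1 - a) • y) • f = fun ω => a * (x • f) ω + (1 - a) * (y • f) ω := by
    ext ω
    simp only [Pi.smul_apply, smul_eq_mul]
    ring
  show φ₀ ((a • x + (1 - a) • y) • f) ≤ a • φ₀ (x • f) + (1 - a) • φ₀ (y • f)
  rw [hfun]
  exact hconv

lemma IsMCLinf.slope_mono (hφ : IsMCLinf μ φ₀) (h0 : φ₀ 0 = 0) {f : Ω → ℝ} (hf : MemLinf μ f)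
    {x y : ℝ} (hx : x ≠ 0) (hy : y ≠ 0) (hxy : x ≤ y) :
    φ₀ (x • f) / x ≤ φ₀ (y • f) / y := by
  simpa [h0] using (hφ.convexOn_smul hf).secant_mono (a := 0) trivial trivial trivial hx hy hxy

-- By convexity the slopes `φ₀ (t • f) / t` decrease as `t ↓ 0`, so this infimum is the
-- directional derivative `φ₀'(0; f)`.
variable (φ₀) in
def dirDerivZero (f : Ω → ℝ) : ℝ :=
  ⨅ t : Set.Ioi (0 : ℝ), φ₀ ((t : ℝ) • f) / t

lemma IsMCLinf.bddBelow_slope (hφ : IsMCLinf μ φ₀) (h0 : φ₀ 0 = 0) {f : Ω → ℝ}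
    (hf : MemLinf μ f) : BddBelow (Set.range fun t : Set.Ioi (0 : ℝ) => φ₀ ((t : ℝ) • f) / t) :=
  ⟨φ₀ ((-1 : ℝ) • f) / (-1), Set.forall_mem_range.2 fun t =>
    hφ.slope_mono h0 hf (by norm_num) t.2.ne' (by linarith [t.2.out])⟩

lemma IsMCLinf.dirDerivZero_le (hφ : IsMCLinf μ φ₀) (h0 : φ₀ 0 = 0) {f : Ω → ℝ}
    (hf : MemLinf μ f) {t : ℝ} (ht : 0 < t) : dirDerivZero φ₀ f ≤ φ₀ (t • f) / t :=
  ciInf_le (hφ.bddBelow_slope h0 hf) ⟨t, ht⟩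

lemma IsMCLinf.dirDerivZero_smul (hφ : IsMCLinf μ φ₀) (h0 : φ₀ 0 = 0) {f : Ω → ℝ}
    (hf : MemLinf μ f) {c : ℝ} (hc : 0 < c) :
    dirDerivZero φ₀ (c • f) = c * dirDerivZero φ₀ f := by
  apply le_antisymm
  · rw [← div_le_iff₀' hc]
    refine le_ciInf fun ⟨t, ht⟩ => ?_
    calc dirDerivZero φ₀ (c • f) / c ≤ φ₀ ((t / c) • c • f) / (t / c) / c :=
          div_le_div_of_nonneg_right
            (hφ.dirDerivZero_le h0 (hf.const_smul c) (div_pos ht hc)) hc.le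
      _ = φ₀ (t • f) / t := by
          rw [smul_smul, div_mul_cancel₀ _ hc.ne', div_div, div_mul_cancel₀ _ hc.ne']
  · refine le_ciInf fun ⟨t, ht⟩ => ?_
    calc c * dirDerivZero φ₀ f ≤ c * (φ₀ ((t * c) • f) / (t * c)) :=
          mul_le_mul_of_nonneg_left (hφ.dirDerivZero_le h0 hf (mul_pos ht hc)) hc.le
      _ = φ₀ (t • c • f) / t := by
          rw [smul_smul]
          field_simp

lemma IsMCLinf.dirDerivZero_add_le (hφ : IsMCLinf μ φ₀) (h0 : φ₀ 0 = 0) {f g : Ω → ℝ}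
    (hf : MemLinf μ f) (hg : MemLinf μ g) :
    dirDerivZero φ₀ (f + g) ≤ dirDerivZero φ₀ f + dirDerivZero φ₀ g := by
  refine le_ciInf_add_ciInf fun ⟨s, hs⟩ ⟨t, ht⟩ => ?_
  set u := min s t
  have hu : 0 < u := lt_min hs ht
  have hmid : (u / 2) • (f + g) = fun ω => (1 / 2) * (u • f) ω + (1 - 1 / 2) * (u • g) ω := by
    ext ω
    simp only [Pi.smul_apply, Pi.add_apply, smul_eq_mul]
    ring
  have hconv := hφ.convex _ _ (hf.const_smul u) (hg.const_smul u) (1 / 2) (by norm_num)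
    (by norm_num)
  rw [← hmid] at hconv
  calc dirDerivZero φ₀ (f + g) ≤ φ₀ ((u / 2) • (f + g)) / (u / 2) :=
        hφ.dirDerivZero_le h0 (hf.add hg) (half_pos hu)
    _ ≤ φ₀ (u • f) / u + φ₀ (u • g) / u := by
        rw [div_le_iff₀ (half_pos hu)]
        field_simp
        linarith
    _ ≤ φ₀ (s • f) / s + φ₀ (t • g) / t :=
        add_le_add (hφ.slope_mono h0 hf hu.ne' hs.ne' (min_le_left _ _))
          (hφ.slope_mono h0 hg hu.ne' ht.ne' (min_le_right _ _))

lemma IsMCLinf.exists_linear_le (hφ : IsMCLinf μ φ₀) (h0 : φ₀ 0 = 0) :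
    ∃ ℓ : linfSubmodule μ →ₗ[ℝ] ℝ, ∀ f, ℓ f ≤ φ₀ f := by
  obtain ⟨ℓ, -, hℓ⟩ := exists_extension_of_le_sublinear (⟨⊥, 0⟩ : linfSubmodule μ →ₗ.[ℝ] ℝ)
    (fun f => dirDerivZero φ₀ f) (fun c hc f => hφ.dirDerivZero_smul h0 f.2 hc)
    (fun f g => hφ.dirDerivZero_add_le h0 f.2 g.2) fun ⟨f, hf⟩ => by
      obtain rfl := (Submodule.mem_bot ℝ).1 hf
      simp [dirDerivZero, h0]
  refine ⟨ℓ, fun f => (hℓ f).trans ?_⟩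
  simpa using hφ.dirDerivZero_le h0 f.2 one_pos

end Subgradient

section Density

variable {μ : Measure Ω} {φ₀ : (Ω → ℝ) → ℝ}

variable (μ) in
def linfIndicator {s : Set Ω} (hs : MeasurableSet s) : linfSubmodule μ :=
  ⟨s.indicator 1, (memLp_top_const (1 : ℝ)).indicator hs⟩

lemma linfIndicator_union {s t : Set Ω} (hs : MeasurableSet s) (ht : MeasurableSet t)
    (hst : Disjoint s t) :
    linfIndicator μ (hs.union ht) = linfIndicator μ hs + linfIndicator μ ht :=
  Subtype.ext (Set.indicator_union_of_disjoint hst 1)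

lemma linfIndicator_empty : linfIndicator μ MeasurableSet.empty = 0 :=
  Subtype.ext (Set.indicator_empty _)

lemma Standing.linear_nonpos (h : Standing μ φ₀) {ℓ : linfSubmodule μ →ₗ[ℝ] ℝ}
    (hℓ : ∀ f, ℓ f ≤ φ₀ f) {f : linfSubmodule μ} (hf : (f : Ω → ℝ) ≤ᵐ[μ] 0) : ℓ f ≤ 0 :=
  (hℓ f).trans (h.zero ▸ h.mc.mono _ _ f.2 MemLp.zero hf)

lemma Standing.linear_nonneg (h : Standing μ φ₀) {ℓ : linfSubmodule μ →ₗ[ℝ] ℝ}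
    (hℓ : ∀ f, ℓ f ≤ φ₀ f) {f : linfSubmodule μ} (hf : 0 ≤ᵐ[μ] (f : Ω → ℝ)) : 0 ≤ ℓ f := by
  have := h.linear_nonpos hℓ (f := -f) (hf.mono fun ω hω => neg_nonpos.2 hω)
  rwa [map_neg, neg_nonpos] at this

lemma Standing.tendsto_linear_linfIndicator (h : Standing μ φ₀) {ℓ : linfSubmodule μ →ₗ[ℝ] ℝ}
    (hℓ : ∀ f, ℓ f ≤ φ₀ f) {s : ℕ → Set Ω} (hs : ∀ n, MeasurableSet (s n)) (hanti : Antitone s)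
    (hempty : ⋂ n, s n = ∅) :
    Tendsto (fun n => ℓ (linfIndicator μ (hs n))) atTop (𝓝 0) := by
  have hφ : Tendsto (fun n => φ₀ ((s n).indicator 1)) atTop (𝓝 0) := by
    refine h.zero ▸ h.leb _ 0 (fun n => (linfIndicator μ (hs n)).2) MemLp.zero
      ⟨1, fun n => .of_forall fun ω => ?_⟩ (.of_forall fun ω => ?_)
    · by_cases hω : ω ∈ s n <;> simp [hω]
    · simpa [hempty] using (hanti.tendsto_indicator s 1 ω).mono_right (pure_le_nhds _)
  exact tendsto_of_tendsto_of_tendsto_of_le_of_le tendsto_const_nhds hφ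
    (fun n => h.linear_nonneg hℓ (.of_forall (Set.indicator_nonneg fun _ _ => zero_le_one)))
    fun n => hℓ _

lemma Standing.exists_measure_real_eq_linear (h : Standing μ φ₀) {ℓ : linfSubmodule μ →ₗ[ℝ] ℝ}
    (hℓ : ∀ f, ℓ f ≤ φ₀ f) :
    ∃ ν : Measure Ω, IsFiniteMeasure ν ∧ ν ≪ μ ∧
      ∀ s (hs : MeasurableSet s), ν.real s = ℓ (linfIndicator μ hs) := by
  classical
  have hind : ∀ {s} (hs : MeasurableSet s), 0 ≤ ℓ (linfIndicator μ hs) := fun _ =>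
    h.linear_nonneg hℓ (.of_forall (Set.indicator_nonneg fun _ _ => zero_le_one))
  have hring : IsSetRing {s : Set Ω | MeasurableSet s} :=
    ⟨.empty, fun _ _ hs ht => hs.union ht, fun _ _ hs ht => hs.diff ht⟩
  let m : AddContent ℝ≥0∞ {s : Set Ω | MeasurableSet s} := hring.addContent_of_union
    (fun s => if hs : MeasurableSet s then .ofReal (ℓ (linfIndicator μ hs)) else 0)
    (by rw [dif_pos .empty, linfIndicator_empty, map_zero, ENNReal.ofReal_zero])
    fun {s t} (hs : MeasurableSet s) (ht : MeasurableSet t) hst => by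
      rw [dif_pos (hs.union ht), dif_pos hs, dif_pos ht, linfIndicator_union hs ht hst, map_add,
        ENNReal.ofReal_add (hind hs) (hind ht)]
  have hm : ∀ {s} (hs : MeasurableSet s), m s = .ofReal (ℓ (linfIndicator μ hs)) := fun hs =>
    dif_pos hs
  let ν := Measure.ofMeasurable (fun s _ => m s) addContent_empty fun f hf hd =>
    addContent_iUnion_eq_sum_of_tendsto_zero hring m (fun s hs => hm hs ▸ ENNReal.ofReal_ne_top)
      (fun s hs hanti hempty => by
        simpa [hm (hs _)] using
          ENNReal.tendsto_ofReal (h.tendsto_linear_linfIndicator hℓ hs hanti hempty))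
      hf (MeasurableSet.iUnion hf) hd
  have hν : ∀ {s} (hs : MeasurableSet s), ν s = .ofReal (ℓ (linfIndicator μ hs)) := fun hs =>
    (Measure.ofMeasurable_apply _ hs).trans (hm hs)
  refine ⟨ν, ⟨hν .univ ▸ ENNReal.ofReal_lt_top⟩, .mk fun s hs hμs => ?_, fun s hs => ?_⟩
  · refine (hν hs).trans (ENNReal.ofReal_eq_zero.2 (h.linear_nonpos hℓ ?_))
    filter_upwards [measure_eq_zero_iff_ae_notMem.1 hμs] with ω hω
    simp [linfIndicator, hω]
  · rw [Measure.real, hν hs, ENNReal.toReal_ofReal (hind hs)]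

end Density

section Representation

variable {μ : Measure Ω} {φ₀ : (Ω → ℝ) → ℝ} {ℓ : linfSubmodule μ →ₗ[ℝ] ℝ} {ν : Measure Ω}

lemma integral_simpleFunc_eq_linear [IsFiniteMeasure ν]
    (hν : ∀ s (hs : MeasurableSet s), ν.real s = ℓ (linfIndicator μ hs)) (g : SimpleFunc Ω ℝ) :
    ∫ ω, g ω ∂ν = ℓ ⟨g, g.memLp_top μ⟩ := by
  induction g using SimpleFunc.induction with
  | @const c s hs =>
    have hg : ⇑(SimpleFunc.piecewise s hs (.const Ω c) (.const Ω 0)) = s.indicator fun _ => c := by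
      ext ω
      by_cases hω : ω ∈ s <;> simp [hω]
    have hsmul : (⟨_, SimpleFunc.memLp_top (.piecewise s hs (.const Ω c) (.const Ω 0)) μ⟩ :
        linfSubmodule μ) = c • linfIndicator μ hs :=
      Subtype.ext <| by
        ext ω
        by_cases hω : ω ∈ s <;> simp [linfIndicator, hω]
    rw [hsmul, map_smul, hg, integral_indicator_const c hs, hν s hs, smul_eq_mul, smul_eq_mul,
      mul_comm]
  | @add f g _ hf hg =>
    have hsum : ∫ ω, (f + g) ω ∂ν = ∫ ω, f ω ∂ν + ∫ ω, g ω ∂ν :=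
      integral_add f.integrable_of_isFiniteMeasure g.integrable_of_isFiniteMeasure
    rw [hsum, hf, hg, ← map_add]
    rfl

lemma Standing.integral_le_of_measureReal_eq (h : Standing μ φ₀) (hℓ : ∀ f, ℓ f ≤ φ₀ f)
    [IsFiniteMeasure ν] (hνμ : ν ≪ μ)
    (hν : ∀ s (hs : MeasurableSet s), ν.real s = ℓ (linfIndicator μ hs))
    {X : Ω → ℝ} (hX : MemLinf μ X) : ∫ ω, X ω ∂ν ≤ φ₀ X := by
  have hXX' := hX.1.ae_eq_mk
  rw [integral_congr_ae (hνμ.ae_le hXX'), h.mc.congr _ _ hX (hX.ae_eq hXX') hXX']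
  have hX' := hX.1.stronglyMeasurable_mk
  set C := lpNorm X ⊤ μ
  have hbound : ∀ᵐ ω ∂μ, ‖hX.1.mk X ω‖ ≤ C := by
    filter_upwards [ae_le_lpNorm_exponent_top hX, hXX'] with ω hω hωeq
    rwa [← hωeq]
  set g := hX'.approxBounded C
  have hg_le : ∀ n ω, ‖g n ω‖ ≤ C := hX'.norm_approxBounded_le lpNorm_nonneg
  have hg_lim := hX'.tendsto_approxBounded_ae hbound
  have hint : Tendsto (fun n => ∫ ω, g n ω ∂ν) atTop (𝓝 (∫ ω, hX.1.mk X ω ∂ν)) :=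
    tendsto_integral_of_dominated_convergence (fun _ => C)
      (fun n => (g n).aestronglyMeasurable) (integrable_const C)
      (fun n => .of_forall (hg_le n)) (hνμ.ae_le hg_lim)
  have hφ : Tendsto (fun n => φ₀ (g n)) atTop (𝓝 (φ₀ (hX.1.mk X))) :=
    h.leb _ _ (fun n => (g n).memLp_top μ) (hX.ae_eq hXX') ⟨C, fun n => .of_forall (hg_le n)⟩
      hg_lim
  refine le_of_tendsto_of_tendsto' hint hφ fun n => ?_
  rw [integral_simpleFunc_eq_linear hν]
  exact hℓ _

lemma Standing.exists_integral_mul_le [SigmaFinite μ] (h : Standing μ φ₀) :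
    ∃ Z : Ω → ℝ, Integrable Z μ ∧ (∀ ω, 0 ≤ Z ω) ∧
      ∀ X, MemLinf μ X → ∫ ω, X ω * Z ω ∂μ ≤ φ₀ X := by
  obtain ⟨ℓ, hℓ⟩ := h.mc.exists_linear_le h.zero
  obtain ⟨ν, hfin, hνμ, hν⟩ := h.exists_measure_real_eq_linear hℓ
  refine ⟨fun ω => (ν.rnDeriv μ ω).toReal, Measure.integrable_toReal_rnDeriv,
    fun ω => ENNReal.toReal_nonneg, fun X hX => ?_⟩
  calc ∫ ω, X ω * (ν.rnDeriv μ ω).toReal ∂μ = ∫ ω, X ω ∂ν := by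
        simp_rw [mul_comm (X _)]
        exact integral_rnDeriv_smul hνμ
    _ ≤ φ₀ X := h.integral_le_of_measureReal_eq hℓ hνμ hν hX

lemma Standing.hatphi_nonneg [SigmaFinite μ] (h : Standing μ φ₀) {Y : Ω → ℝ}
    (hY0 : ∀ ω, 0 ≤ Y ω) : 0 ≤ hatphi μ φ₀ Y := by
  obtain ⟨Z, hZ, hZ0, hZle⟩ := h.exists_integral_mul_le
  have hconj : conj μ φ₀ Z ≤ 0 :=
    iSup_le fun X => EReal.coe_nonpos.2 (sub_nonpos.2 (hZle X.1 X.2))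
  have heE : 0 ≤ eE μ (fun ω => Y ω * Z ω) := by
    rw [eE, lintegral_congr fun ω => ENNReal.ofReal_eq_zero.2
      (neg_nonpos.2 (mul_nonneg (hY0 ω) (hZ0 ω))), lintegral_zero, EReal.coe_ennreal_zero,
      sub_zero]
    exact EReal.coe_ennreal_nonneg _
  calc (0 : EReal) = 0 - 0 := (sub_zero 0).symm
    _ ≤ eE μ (fun ω => Y ω * Z ω) - conj μ φ₀ Z := EReal.sub_le_sub heE hconj
    _ ≤ hatphi μ φ₀ Y :=
        le_iSup (fun Z : {Z : Ω → ℝ // MemDom μ φ₀ Z} =>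
          eE μ (fun ω => Y ω * Z.1 ω) - conj μ φ₀ Z.1) ⟨Z, hZ, hconj.trans_lt EReal.zero_lt_top⟩

end Representation

/-- if `(φ, S)` is a Lebesgue extension of `φ₀`, then for every `X ∈ S`
and `α > 0`, both `φ̂(α|X| 1_{{|X|>N}})` and `φ(α|X| 1_{{|X|>N}})` tend to `0` as `N → ∞`. -/
theorem stmt2 (μ : Measure Ω) [IsProbabilityMeasure μ]
    (φ₀ : (Ω → ℝ) → ℝ) (h : Standing μ φ₀)
    (S : Set (Ω → ℝ)) (φ : (Ω → ℝ) → EReal) (hext : IsLebExt μ φ₀ S φ) :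
    ∀ X ∈ S, ∀ α : ℝ, 0 < α →
      Tendsto (fun N : ℕ => hatphi μ φ₀ (tailFn X α N)) atTop (𝓝 (0 : EReal)) ∧
      Tendsto (fun N : ℕ => φ (tailFn X α N)) atTop (𝓝 (0 : EReal)) := by
  intro X hX α hα
  have htail : ∀ N, tailFn X α N ∈ S := hext.solid.tailFn_mem hX hα.le
  have hφ0 : φ 0 = 0 := by rw [hext.restrict 0 MemLp.zero, h.zero, EReal.coe_zero]
  have hφ : Tendsto (fun N : ℕ => φ (tailFn X α N)) atTop (𝓝 0) :=
    hφ0 ▸ hext.leb _ 0 _ htail hext.solid.zero (hext.solid.mul_abs_mem hX α)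
      (fun N => .of_forall (abs_tailFn_le X hα.le N)) (.of_forall (tendsto_tailFn_zero X α))
  refine ⟨tendsto_of_tendsto_of_tendsto_of_le_of_le tendsto_const_nhds hφ
    (fun N => h.hatphi_nonneg (tailFn_nonneg X hα.le N))
    (fun N => hext.hatphi_le (htail N) (tailFn_nonneg X hα.le N)), hφ⟩

end MaxLebExt
end
end

section
/- Let 𝒳 ⊆ L⁰ be a solid space containing the constants and ψ : 𝒳 → ℝ a finite-valued monotone convex function with the Lebesgue property on 𝒳. Then ψ has a σ-additive subgradient at every point: for every X ∈ 𝒳 there exists Z ∈ 𝒳~ₙ such that 𝔼[XZ] − ψ(X) ≥ 𝔼[YZ] − ψ(Y) for all Y ∈ 𝒳. -/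
open MeasureTheory Filter Topology
open scoped ENNReal

noncomputable section

namespace MaxLebExt

variable {Ω : Type*} [MeasurableSpace Ω]

/-!
Fix `X ∈ S`. The one-sided directional derivative of `ψ` at `X` is sublinear, so Hahn–Banach
gives a linear functional `g` on `S` with `g W ≤ ψ (X + W) - ψ X`. Monotonicity of `ψ` makes `g`
positive, and squeezing `g (W n - W)` between `ψ X - ψ (X - (W n - W))` and
`ψ (X + (W n - W)) - ψ X` transfers the Lebesgue property from `ψ` to `g`. Hence `A ↦ g 1_A` is
a finite measure `ν ≪ μ`, approximation by simple functions gives `g W = ∫ W dν` on all of `S`,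
and `Z = dν/dμ` is the required subgradient.
-/

open Set Function

section DirectionalDerivative

variable {E : Type*} [AddCommGroup E] [Module ℝ E] {f : E → ℝ}

/-- For convex `f` the quotients are bounded below (`ConvexOn.bddBelow_slope`); otherwise the
real `⨅` would be the junk value `0`. -/
def rightDirDeriv (f : E → ℝ) (x y : E) : ℝ :=
  ⨅ t : Ioi (0 : ℝ), (f (x + (t : ℝ) • y) - f x) / t

theorem _root_.ConvexOn.comp_lineMap (hf : ConvexOn ℝ univ f) (x y : E) :
    ConvexOn ℝ univ fun t : ℝ => f (x + t • y) := by
  have h := hf.comp_affineMap (AffineMap.lineMap x (x + y))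
  rw [preimage_univ] at h
  refine h.congr fun t _ => ?_
  simp [AffineMap.lineMap_apply_module', add_comm]

theorem _root_.ConvexOn.slope_le_slope (hf : ConvexOn ℝ univ f) (x y : E) {s t : ℝ}
    (hs : s ≠ 0) (ht : t ≠ 0) (hst : s ≤ t) :
    (f (x + s • y) - f x) / s ≤ (f (x + t • y) - f x) / t := by
  simpa using (hf.comp_lineMap x y).secant_mono (a := 0) trivial trivial trivial hs ht hst

theorem _root_.ConvexOn.sub_le_slope (hf : ConvexOn ℝ univ f) (x y : E) {t : ℝ} (ht : 0 < t) :
    f x - f (x - y) ≤ (f (x + t • y) - f x) / t := by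
  have h := hf.slope_le_slope x y (s := -1) (by norm_num) ht.ne' (by linarith)
  rw [neg_one_smul, ← sub_eq_add_neg, div_neg, div_one] at h
  linarith

theorem _root_.ConvexOn.bddBelow_slope (hf : ConvexOn ℝ univ f) (x y : E) :
    BddBelow (range fun t : Ioi (0 : ℝ) => (f (x + (t : ℝ) • y) - f x) / t) :=
  ⟨f x - f (x - y), by rintro _ ⟨t, rfl⟩; exact hf.sub_le_slope x y t.2⟩

theorem _root_.ConvexOn.rightDirDeriv_le (hf : ConvexOn ℝ univ f) (x y : E) {t : ℝ}
    (ht : 0 < t) :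
    rightDirDeriv f x y ≤ (f (x + t • y) - f x) / t :=
  ciInf_le (hf.bddBelow_slope x y) ⟨t, ht⟩

theorem _root_.ConvexOn.rightDirDeriv_smul (hf : ConvexOn ℝ univ f) (x y : E) {c : ℝ}
    (hc : 0 < c) : rightDirDeriv f x (c • y) = c * rightDirDeriv f x y := by
  have hslope : ∀ t : ℝ, 0 < t →
      (f (x + t • c • y) - f x) / t = c * ((f (x + (t * c) • y) - f x) / (t * c)) := by
    intro t ht
    rw [smul_smul]
    field_simp
  refine le_antisymm ?_ ?_
  · refine (le_ciInf fun t => ?_).trans_eq (Real.mul_iInf_of_nonneg hc.le _).symm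
    have ht : 0 < (t : ℝ) / c := div_pos t.2 hc
    calc rightDirDeriv f x (c • y) ≤ (f (x + ((t : ℝ) / c) • c • y) - f x) / ((t : ℝ) / c) :=
          hf.rightDirDeriv_le x _ ht
      _ = c * ((f (x + (t : ℝ) • y) - f x) / t) := by
          rw [hslope _ ht, div_mul_cancel₀ _ hc.ne']
  · refine le_ciInf fun t => ?_
    rw [hslope _ t.2]
    exact mul_le_mul_of_nonneg_left (hf.rightDirDeriv_le x y (mul_pos t.2 hc)) hc.le

theorem _root_.ConvexOn.rightDirDeriv_add_le (hf : ConvexOn ℝ univ f) (x y w : E) :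
    rightDirDeriv f x (y + w) ≤ rightDirDeriv f x y + rightDirDeriv f x w := by
  have key : ∀ s t : ℝ, 0 < s → 0 < t → rightDirDeriv f x (y + w) ≤
      (f (x + s • y) - f x) / s + (f (x + t • w) - f x) / t := by
    intro s t hs ht
    set r := min s t
    have hr : 0 < r := lt_min hs ht
    have hmid : f (x + (r / 2) • (y + w)) ≤ (f (x + r • y) + f (x + r • w)) / 2 := by
      have h := hf.2 (mem_univ (x + r • y)) (mem_univ (x + r • w))
        (by norm_num : (0 : ℝ) ≤ 1 / 2) (by norm_num : (0 : ℝ) ≤ 1 / 2) (by norm_num)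
      have harg : (1 / 2 : ℝ) • (x + r • y) + (1 / 2 : ℝ) • (x + r • w) =
          x + (r / 2) • (y + w) := by
        module
      rw [harg, smul_eq_mul, smul_eq_mul] at h
      linarith
    calc rightDirDeriv f x (y + w) ≤ (f (x + (r / 2) • (y + w)) - f x) / (r / 2) :=
          hf.rightDirDeriv_le x _ (half_pos hr)
      _ ≤ (f (x + r • y) - f x) / r + (f (x + r • w) - f x) / r := by
          rw [div_div_eq_mul_div, ← add_div, div_le_div_iff_of_pos_right hr]
          linarith
      _ ≤ (f (x + s • y) - f x) / s + (f (x + t • w) - f x) / t :=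
          add_le_add (hf.slope_le_slope x y hr.ne' hs.ne' (min_le_left s t))
            (hf.slope_le_slope x w hr.ne' ht.ne' (min_le_right s t))
  rw [← sub_le_iff_le_add]
  refine le_ciInf fun t => ?_
  rw [sub_le_iff_le_add', ← sub_le_iff_le_add]
  exact le_ciInf fun s => by linarith [key t s t.2 s.2]

theorem _root_.ConvexOn.exists_linearMap_le_sub (hf : ConvexOn ℝ univ f) (x : E) :
    ∃ g : E →ₗ[ℝ] ℝ, ∀ y, g y ≤ f (x + y) - f x := by
  obtain ⟨g, -, hg⟩ := exists_extension_of_le_sublinear ⊥ (rightDirDeriv f x)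
    (fun c hc y => hf.rightDirDeriv_smul x y hc) (hf.rightDirDeriv_add_le x)
    (fun ⟨y, hy⟩ => by
      obtain rfl : y = 0 := (Submodule.mem_bot ℝ).1 hy
      simp only [rightDirDeriv, smul_zero, add_zero, sub_self, zero_div, ciInf_const]
      exact le_rfl)
  exact ⟨g, fun y => (hg y).trans (by simpa using hf.rightDirDeriv_le x y one_pos)⟩

end DirectionalDerivative

namespace IsSolidSpace

variable {μ : Measure Ω} {S : Set (Ω → ℝ)}

def toSubmodule (hS : IsSolidSpace μ S) : Submodule ℝ (Ω → ℝ) where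
  carrier := S
  zero_mem' := hS.zero
  add_mem' {X Y} hX hY := hS.add X hX Y hY
  smul_mem' c X hX := hS.smul c X hX

theorem abs_mem (hS : IsSolidSpace μ S) {X : Ω → ℝ} (hX : X ∈ S) : (fun ω => |X ω|) ∈ S :=
  hS.solid _ (hS.aesm X hX).norm X hX (.of_forall fun ω => (abs_abs (X ω)).le)

theorem simpleFunc_mem (hS : IsSolidSpace μ S) (hone : (1 : Ω → ℝ) ∈ S) (s : SimpleFunc Ω ℝ) :
    ⇑s ∈ S := by
  obtain ⟨C, hC⟩ := (s.map abs).exists_forall_le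
  refine hS.solid _ s.stronglyMeasurable.aestronglyMeasurable _ (hS.smul C 1 hone)
    (.of_forall fun ω => ?_)
  simpa using (hC ω).trans (le_abs_self C)

def indicator (hS : IsSolidSpace μ S) (hone : (1 : Ω → ℝ) ∈ S) {A : Set Ω} (hA : MeasurableSet A) :
    hS.toSubmodule :=
  ⟨A.indicator 1, hS.solid _ (measurable_one.indicator hA).aestronglyMeasurable 1 hone
    (.of_forall fun ω => by by_cases h : ω ∈ A <;> simp [h])⟩

theorem abs_coe_indicator_le_one (hS : IsSolidSpace μ S) (hone : (1 : Ω → ℝ) ∈ S) {A : Set Ω}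
    (hA : MeasurableSet A) (ω : Ω) : |(hS.indicator hone hA : Ω → ℝ) ω| ≤ 1 := by
  by_cases h : ω ∈ A <;> simp [indicator, h]

end IsSolidSpace

section Functional

variable {μ : Measure Ω} {S : Set (Ω → ℝ)} {hS : IsSolidSpace μ S}

def IsSubgradientAt (ψ : (Ω → ℝ) → ℝ) (X : Ω → ℝ) (g : hS.toSubmodule →ₗ[ℝ] ℝ) : Prop :=
  ∀ w : hS.toSubmodule, g w ≤ ψ (X + w) - ψ X

def IsPositiveFunctional (g : hS.toSubmodule →ₗ[ℝ] ℝ) : Prop :=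
  ∀ w : hS.toSubmodule, 0 ≤ᵐ[μ] (w : Ω → ℝ) → 0 ≤ g w

def HasLebesgueProperty (g : hS.toSubmodule →ₗ[ℝ] ℝ) : Prop :=
  ∀ (W : ℕ → hS.toSubmodule) (W₀ : hS.toSubmodule) (D : Ω → ℝ), D ∈ S →
    (∀ n, ∀ᵐ ω ∂μ, |(W n : Ω → ℝ) ω| ≤ D ω) →
    (∀ᵐ ω ∂μ, Tendsto (fun n => (W n : Ω → ℝ) ω) atTop (𝓝 ((W₀ : Ω → ℝ) ω))) →
    Tendsto (fun n => g (W n)) atTop (𝓝 (g W₀))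

variable {ψ : (Ω → ℝ) → ℝ} {X : Ω → ℝ}

theorem IsMCOn.convexOn_toSubmodule (hS : IsSolidSpace μ S) (hmc : IsMCOn μ S ψ) :
    ConvexOn ℝ univ fun w : hS.toSubmodule => ψ w := by
  refine ⟨convex_univ, fun v _ w _ a b ha hb hab => ?_⟩
  obtain rfl : b = 1 - a := by linarith
  exact hmc.convex v v.2 w w.2 a ha (by linarith)

theorem exists_isSubgradientAt (hS : IsSolidSpace μ S) (hmc : IsMCOn μ S ψ) (hX : X ∈ S) :
    ∃ g : hS.toSubmodule →ₗ[ℝ] ℝ, IsSubgradientAt ψ X g :=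
  (hmc.convexOn_toSubmodule hS).exists_linearMap_le_sub ⟨X, hX⟩

theorem IsSubgradientAt.isPositiveFunctional {g : hS.toSubmodule →ₗ[ℝ] ℝ}
    (hg : IsSubgradientAt ψ X g) (hmc : IsMCOn μ S ψ) (hX : X ∈ S) :
    IsPositiveFunctional g := by
  intro w hw
  have hle : ψ (X + ↑(-w)) ≤ ψ X :=
    hmc.mono _ (hS.add X hX _ (-w).2) X hX (hw.mono fun ω hω => by simpa using hω)
  linarith [hg (-w), map_neg g w]

theorem LebesgueOn.tendsto_add (hL : LebesgueOn μ S ψ) (hS : IsSolidSpace μ S) (hX : X ∈ S)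
    {V : ℕ → Ω → ℝ} (hV : ∀ n, V n ∈ S) {D : Ω → ℝ} (hD : D ∈ S)
    (hdom : ∀ n, ∀ᵐ ω ∂μ, |V n ω| ≤ D ω) (hlim : ∀ᵐ ω ∂μ, Tendsto (fun n => V n ω) atTop (𝓝 0)) :
    Tendsto (fun n => ψ (X + V n)) atTop (𝓝 (ψ X)) := by
  refine hL (fun n => X + V n) X _ (fun n => hS.add X hX _ (hV n)) hX
    (hS.add _ (hS.abs_mem hX) D hD) (fun n => (hdom n).mono fun ω hω => ?_) ?_
  · exact (abs_add_le _ _).trans (by simpa using hω)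
  · filter_upwards [hlim] with ω hω
    simpa using tendsto_const_nhds.add hω

theorem IsSubgradientAt.hasLebesgueProperty {g : hS.toSubmodule →ₗ[ℝ] ℝ}
    (hg : IsSubgradientAt ψ X g) (hL : LebesgueOn μ S ψ) (hX : X ∈ S) :
    HasLebesgueProperty g := by
  intro W W₀ D hD hdom hlim
  set V : ℕ → hS.toSubmodule := fun n => W n - W₀
  have hVdom : ∀ n, ∀ᵐ ω ∂μ, |(V n : Ω → ℝ) ω| ≤ D ω + |(W₀ : Ω → ℝ) ω| := fun n =>
    (hdom n).mono fun ω hω => (abs_sub _ _).trans (by linarith)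
  have hVnegdom : ∀ n, ∀ᵐ ω ∂μ, |(-V n : Ω → ℝ) ω| ≤ D ω + |(W₀ : Ω → ℝ) ω| := fun n =>
    (hVdom n).mono fun ω hω => by simpa using hω
  have hVlim : ∀ᵐ ω ∂μ, Tendsto (fun n => (V n : Ω → ℝ) ω) atTop (𝓝 0) := by
    filter_upwards [hlim] with ω hω
    simpa [V] using hω.sub_const ((W₀ : Ω → ℝ) ω)
  have hD' : (D + fun ω => |(W₀ : Ω → ℝ) ω|) ∈ S := hS.add _ hD _ (hS.abs_mem W₀.2)
  have hup := hL.tendsto_add hS hX (fun n => (V n).2) hD' hVdom hVlim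
  have hlow := hL.tendsto_add hS hX (fun n => (-V n).2) hD' hVnegdom
    (hVlim.mono fun ω hω => by simpa using hω.neg)
  have hV : Tendsto (fun n => g (V n)) atTop (𝓝 0) := by
    refine tendsto_of_tendsto_of_tendsto_of_le_of_le (g := fun n => ψ X - ψ (X + ↑(-V n)))
      (h := fun n => ψ (X + V n) - ψ X) ?_ ?_ (fun n => ?_) (fun n => hg (V n))
    · simpa using (tendsto_const_nhds (x := ψ X)).sub hlow
    · simpa using hup.sub_const (ψ X)
    · linarith [hg (-V n), map_neg g (V n)]
  simpa [V] using hV.const_add (g W₀)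

end Functional

section Representation

variable {μ : Measure Ω} {S : Set (Ω → ℝ)} {hS : IsSolidSpace μ S} {g : hS.toSubmodule →ₗ[ℝ] ℝ}

theorem apply_simpleFunc_eq_integral (hone : (1 : Ω → ℝ) ∈ S) {ν : Measure Ω} [IsFiniteMeasure ν]
    (hν : ∀ A (hA : MeasurableSet A), ν.real A = g (hS.indicator hone hA))
    (s : SimpleFunc Ω ℝ) :
    g ⟨s, hS.simpleFunc_mem hone s⟩ = ∫ ω, s ω ∂ν := by
  induction s using SimpleFunc.induction with
  | @const c A hA =>
    have hfun :
        ⇑(SimpleFunc.piecewise A hA (.const Ω c) (.const Ω 0)) = A.indicator fun _ => c := by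
      ext ω
      by_cases h : ω ∈ A <;> simp [h]
    calc g ⟨_, _⟩ = g (c • hS.indicator hone hA) := by
          congr 1
          ext ω
          by_cases h : ω ∈ A <;> simp [IsSolidSpace.indicator, h]
      _ = _ := by
          rw [map_smul, smul_eq_mul, ← hν A hA, hfun, integral_indicator_const _ hA, smul_eq_mul,
            mul_comm]
  | @add f q _ hf hq =>
    have hs : (⟨_, hS.simpleFunc_mem hone (f + q)⟩ : hS.toSubmodule) =
        ⟨f, hS.simpleFunc_mem hone f⟩ + ⟨q, hS.simpleFunc_mem hone q⟩ := rfl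
    rw [hs, map_add, hf, hq, SimpleFunc.coe_add,
      integral_add' f.integrable_of_isFiniteMeasure q.integrable_of_isFiniteMeasure]

theorem IsPositiveFunctional.apply_le_apply_of_ae_le (hpos : IsPositiveFunctional g)
    {v w : hS.toSubmodule} (h : (v : Ω → ℝ) ≤ᵐ[μ] w) : g v ≤ g w := by
  have := hpos (w - v) (h.mono fun ω hω => by simpa using hω)
  rwa [map_sub, sub_nonneg] at this

theorem IsPositiveFunctional.apply_eq_apply_of_ae_eq (hpos : IsPositiveFunctional g)
    {v w : hS.toSubmodule} (h : (v : Ω → ℝ) =ᵐ[μ] w) : g v = g w :=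
  (hpos.apply_le_apply_of_ae_le h.le).antisymm (hpos.apply_le_apply_of_ae_le h.symm.le)

theorem IsPositiveFunctional.apply_indicator_nonneg (hpos : IsPositiveFunctional g)
    (hone : (1 : Ω → ℝ) ∈ S) {A : Set Ω} (hA : MeasurableSet A) : 0 ≤ g (hS.indicator hone hA) :=
  hpos _ (.of_forall fun ω => Set.indicator_nonneg (fun _ _ => zero_le_one) ω)

theorem hasSum_apply_indicator (hpos : IsPositiveFunctional g) (hleb : HasLebesgueProperty g)
    (hone : (1 : Ω → ℝ) ∈ S) {A : ℕ → Set Ω} (hA : ∀ i, MeasurableSet (A i))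
    (hdisj : Pairwise (Disjoint on A)) :
    HasSum (fun i => g (hS.indicator hone (hA i))) (g (hS.indicator hone (.iUnion hA))) := by
  rw [hasSum_iff_tendsto_nat_of_nonneg fun i => hpos.apply_indicator_nonneg hone (hA i)]
  have hpartial : ∀ n, ∑ i ∈ Finset.range n, g (hS.indicator hone (hA i)) =
      g (hS.indicator hone (Finset.measurableSet_biUnion (Finset.range n) fun i _ => hA i)) := by
    intro n
    rw [← map_sum]
    congr 1
    ext ω
    simp only [IsSolidSpace.indicator, Submodule.coe_sum, Finset.sum_apply]
    rw [Finset.indicator_biUnion_apply _ _ (hdisj.set_pairwise _)]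
  simp_rw [hpartial]
  refine hleb _ _ 1 hone (fun n => .of_forall fun ω => ?_) (.of_forall fun ω => ?_)
  · exact hS.abs_coe_indicator_le_one hone _ ω
  · exact ((tendsto_indicator_biUnion_finset A 1 ω).comp tendsto_finset_range).mono_right
      (pure_le_nhds _)

theorem exists_measure_real_eq_apply_indicator (hpos : IsPositiveFunctional g)
    (hleb : HasLebesgueProperty g) (hone : (1 : Ω → ℝ) ∈ S) :
    ∃ ν : Measure Ω, IsFiniteMeasure ν ∧ ν ≪ μ ∧
      ∀ A (hA : MeasurableSet A), ν.real A = g (hS.indicator hone hA) := by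
  let ν : Measure Ω :=
    Measure.ofMeasurable (fun A hA => ENNReal.ofReal (g (hS.indicator hone hA)))
    (by
      rw [show hS.indicator hone MeasurableSet.empty = 0 from
        Subtype.ext (Set.indicator_empty _), map_zero, ENNReal.ofReal_zero])
    (fun A hA hdisj => by
      have h := hasSum_apply_indicator hpos hleb hone hA hdisj
      rw [← h.tsum_eq, ENNReal.ofReal_tsum_of_nonneg
        (fun i => hpos.apply_indicator_nonneg hone (hA i)) h.summable])
  have hν : ∀ A (hA : MeasurableSet A), ν A = ENNReal.ofReal (g (hS.indicator hone hA)) :=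
    fun A hA => Measure.ofMeasurable_apply A hA
  refine ⟨ν, ⟨by simp [hν _ MeasurableSet.univ]⟩, .mk fun A hA hμA => ?_, fun A hA => ?_⟩
  · rw [hν A hA, hpos.apply_eq_apply_of_ae_eq (w := 0), map_zero, ENNReal.ofReal_zero]
    filter_upwards [measure_eq_zero_iff_ae_notMem.1 hμA] with ω hω
    simp [IsSolidSpace.indicator, hω]
  · rw [measureReal_def, hν A hA, ENNReal.toReal_ofReal (hpos.apply_indicator_nonneg hone hA)]

theorem integrable_and_apply_eq_integral_of_stronglyMeasurable (hpos : IsPositiveFunctional g)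
    (hleb : HasLebesgueProperty g) (hone : (1 : Ω → ℝ) ∈ S) {ν : Measure Ω} [IsFiniteMeasure ν]
    (hν : ∀ A (hA : MeasurableSet A), ν.real A = g (hS.indicator hone hA)) {W : Ω → ℝ}
    (hW : W ∈ S) (hWm : StronglyMeasurable W) :
    Integrable W ν ∧ g ⟨W, hW⟩ = ∫ ω, W ω ∂ν := by
  let s : ℕ → SimpleFunc Ω ℝ := SimpleFunc.approxOn W hWm.measurable univ 0 (mem_univ 0)
  have hs_le : ∀ n ω, |s n ω| ≤ 2 * |W ω| := fun n ω => by
    simpa [two_mul] using SimpleFunc.norm_approxOn_zero_le hWm.measurable (mem_univ 0) ω n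
  have hs_lim : ∀ ω, Tendsto (fun n => s n ω) atTop (𝓝 (W ω)) := fun ω =>
    SimpleFunc.tendsto_approxOn hWm.measurable (mem_univ 0) (by simp)
  have h2W : (fun ω => 2 * |W ω|) ∈ hS.toSubmodule := hS.smul 2 _ (hS.abs_mem hW)
  have hs_int_le : ∀ n, ∫ ω, ‖s n ω‖ ∂ν ≤ g ⟨_, h2W⟩ := fun n => by
    have h := apply_simpleFunc_eq_integral hone hν ((s n).map abs)
    simp only [SimpleFunc.coe_map, comp_apply] at h
    simp only [Real.norm_eq_abs]
    rw [← h]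
    exact hpos.apply_le_apply_of_ae_le (.of_forall fun ω => hs_le n ω)
  have hint : Integrable W ν := by
    refine memLp_one_iff_integrable.1 ⟨hWm.aestronglyMeasurable, ?_⟩
    refine (Lp.eLpNorm_le_of_ae_tendsto (C := ENNReal.ofReal (g ⟨_, h2W⟩))
      (.of_forall fun n => ?_) (fun n => (s n).aestronglyMeasurable)
      (.of_forall hs_lim)).trans_lt ENNReal.ofReal_lt_top
    rw [eLpNorm_one_eq_lintegral_enorm,
      ← ofReal_integral_norm_eq_lintegral_enorm (s n).integrable_of_isFiniteMeasure]
    exact ENNReal.ofReal_le_ofReal (hs_int_le n)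
  refine ⟨hint, tendsto_nhds_unique (hleb (fun n => ⟨s n, hS.simpleFunc_mem hone (s n)⟩) ⟨W, hW⟩
    _ h2W (fun n => .of_forall (hs_le n)) (.of_forall hs_lim)) ?_⟩
  simp_rw [apply_simpleFunc_eq_integral hone hν]
  exact tendsto_integral_of_dominated_convergence _ (fun n => (s n).aestronglyMeasurable)
    (hint.abs.const_mul 2) (fun n => .of_forall (hs_le n)) (.of_forall hs_lim)

theorem integrable_and_apply_eq_integral (hpos : IsPositiveFunctional g)
    (hleb : HasLebesgueProperty g) (hone : (1 : Ω → ℝ) ∈ S) {ν : Measure Ω} [IsFiniteMeasure ν]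
    (hνμ : ν ≪ μ) (hν : ∀ A (hA : MeasurableSet A), ν.real A = g (hS.indicator hone hA))
    {W : Ω → ℝ} (hW : W ∈ S) : Integrable W ν ∧ g ⟨W, hW⟩ = ∫ ω, W ω ∂ν := by
  have hWm := hS.aesm W hW
  have hW' : hWm.mk W ∈ S := hS.solid _ hWm.stronglyMeasurable_mk.aestronglyMeasurable W hW
    (hWm.ae_eq_mk.mono fun ω hω => by rw [hω])
  obtain ⟨hint, heq⟩ := integrable_and_apply_eq_integral_of_stronglyMeasurable hpos hleb hone hν
    hW' hWm.stronglyMeasurable_mk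
  have hae : W =ᵐ[ν] hWm.mk W := hνμ.ae_eq hWm.ae_eq_mk
  refine ⟨hint.congr hae.symm, ?_⟩
  rw [hpos.apply_eq_apply_of_ae_eq (w := ⟨_, hW'⟩) hWm.ae_eq_mk, heq, integral_congr_ae hae]

theorem exists_density_of_hasLebesgueProperty [SigmaFinite μ] (hpos : IsPositiveFunctional g)
    (hleb : HasLebesgueProperty g) (hone : (1 : Ω → ℝ) ∈ S) :
    ∃ Z : Ω → ℝ, ∀ W (hW : W ∈ S),
      Integrable (fun ω => W ω * Z ω) μ ∧ g ⟨W, hW⟩ = ∫ ω, W ω * Z ω ∂μ := by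
  obtain ⟨ν, hνfin, hνμ, hν⟩ := exists_measure_real_eq_apply_indicator hpos hleb hone
  refine ⟨fun ω => (ν.rnDeriv μ ω).toReal, fun W hW => ?_⟩
  obtain ⟨hint, heq⟩ := integrable_and_apply_eq_integral hpos hleb hone hνμ hν hW
  simp_rw [mul_comm (W _)]
  exact ⟨(integrable_toReal_rnDeriv_mul_iff hνμ).2 hint,
    heq.trans (integral_toReal_rnDeriv_mul hνμ).symm⟩

end Representation

/-- a finite monotone convex function with the Lebesgue property on a
solid space `S` containing the constants admits a σ-additive subgradient everywhere:
for each `X ∈ S` there is `Z ∈ S~ₙ` with `𝔼[YZ] − ψ(Y) ≤ 𝔼[XZ] − ψ(X)` for all `Y ∈ S`. -/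
theorem stmt7 (μ : Measure Ω) [IsProbabilityMeasure μ]
    (S : Set (Ω → ℝ)) (hS : IsSolidSpace μ S) (hconst : ∀ c : ℝ, (fun _ => c) ∈ S)
    (ψ : (Ω → ℝ) → ℝ) (hmc : IsMCOn μ S ψ) (hL : LebesgueOn μ S ψ) :
    ∀ X ∈ S, ∃ Z : Ω → ℝ,
      (∀ W ∈ S, Integrable (fun ω => W ω * Z ω) μ) ∧
      ∀ Y ∈ S, (∫ ω, Y ω * Z ω ∂μ) - ψ Y ≤ (∫ ω, X ω * Z ω ∂μ) - ψ X := by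
  intro X hX
  obtain ⟨g, hg⟩ := exists_isSubgradientAt hS hmc hX
  obtain ⟨Z, hZ⟩ := exists_density_of_hasLebesgueProperty (hg.isPositiveFunctional hmc hX)
    (hg.hasLebesgueProperty hL hX) (hconst 1)
  refine ⟨Z, fun W hW => (hZ W hW).1, fun Y hY => ?_⟩
  have h := hg (⟨Y, hY⟩ - ⟨X, hX⟩)
  rw [map_sub, Submodule.coe_sub, add_sub_cancel] at h
  linarith [(hZ Y hY).2, (hZ X hX).2]

end MaxLebExt
end
end

section
/- Let ψ : 𝒳 → ℝ be a finite monotone convex function on a solid space 𝒳 ⊆ L⁰. If X, Y ∈ 𝒳 satisfy ψ(α|X − Y|) = 0 for all α > 0, then ψ(X) = ψ(Y). -/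
open MeasureTheory Filter Topology
open scoped ENNReal

noncomputable section

namespace MaxLebExt

variable {Ω : Type*} [MeasurableSpace Ω]

/- Put `Z := |X - Y|`, so that `ψ` vanishes on the whole ray `ℝ₊ Z`. For `t ∈ (0,1)`,
`Y + Z = t (½ (2Y) + ½ ((2/t) Z)) + (1 - t) Y`, and convexity twice gives
`ψ(X) ≤ ψ(Y + Z) ≤ ψ(Y) + t (½ ψ(2Y) - ψ(Y))`; letting `t → 0` yields `ψ(X) ≤ ψ(Y)`,
and the roles of `X` and `Y` are symmetric. -/

theorem le_of_forall_le_add_mul {a b K : ℝ} (h : ∀ t : ℝ, 0 < t → t < 1 → a ≤ b + t * K) :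
    a ≤ b := by
  have hlim : Tendsto (fun t : ℝ => b + t * K) (𝓝[>] 0) (𝓝 b) := by
    have hcont : Continuous fun t : ℝ => b + t * K := by fun_prop
    simpa using (hcont.tendsto 0).mono_left nhdsWithin_le_nhds
  refine ge_of_tendsto hlim ?_
  filter_upwards [Ioo_mem_nhdsGT (zero_lt_one' ℝ)] with t ht using h t ht.1 ht.2

theorem IsSolidSpace.abs_sub_mem {μ : Measure Ω} {S : Set (Ω → ℝ)} (hS : IsSolidSpace μ S)
    {X Y : Ω → ℝ} (hX : X ∈ S) (hY : Y ∈ S) : (fun ω => |X ω - Y ω|) ∈ S := by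
  have hsub : X + (fun ω => (-1 : ℝ) * Y ω) ∈ S := hS.add X hX _ (hS.smul (-1) Y hY)
  refine hS.solid _ ((hS.aesm X hX).sub (hS.aesm Y hY)).norm _ hsub ?_
  filter_upwards with ω
  simp [sub_eq_add_neg]

namespace IsMCOn

variable {μ : Measure Ω} {S : Set (Ω → ℝ)} {ψ : (Ω → ℝ) → ℝ}

theorem apply_le_of_eq_convexComb (hψ : IsMCOn μ S ψ) {A B W : Ω → ℝ} (hA : A ∈ S)
    (hB : B ∈ S) {t : ℝ} (ht₀ : 0 ≤ t) (ht₁ : t ≤ 1)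
    (hW : ∀ ω, W ω = t * A ω + (1 - t) * B ω) :
    ψ W ≤ t * ψ A + (1 - t) * ψ B := by
  rw [funext hW]
  exact hψ.convex A hA B hB t ht₀ ht₁

theorem apply_add_le_of_forall_smul_eq_zero (hS : IsSolidSpace μ S) (hψ : IsMCOn μ S ψ)
    {Y Z : Ω → ℝ} (hY : Y ∈ S) (hZ : Z ∈ S)
    (hnull : ∀ α : ℝ, 0 < α → ψ (fun ω => α * Z ω) = 0) :
    ψ (fun ω => Y ω + Z ω) ≤ ψ Y := by
  refine le_of_forall_le_add_mul (K := (1 / 2) * ψ (fun ω => 2 * Y ω) - ψ Y) fun t ht₀ ht₁ => ?_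
  have hmid : ψ (fun ω => Y ω + t⁻¹ * Z ω) ≤ (1 / 2) * ψ (fun ω => 2 * Y ω) := by
    have h := hψ.apply_le_of_eq_convexComb (W := fun ω => Y ω + t⁻¹ * Z ω)
      (hS.smul 2 Y hY) (hS.smul (2 / t) Z hZ) (t := 1 / 2) (by norm_num) (by norm_num)
      (fun ω => by field_simp; ring)
    rw [hnull _ (by positivity)] at h
    linarith
  have hsplit := hψ.apply_le_of_eq_convexComb (W := fun ω => Y ω + Z ω)
    (A := fun ω => Y ω + t⁻¹ * Z ω) (hS.add Y hY _ (hS.smul t⁻¹ Z hZ)) hY ht₀.le ht₁.le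
    (fun ω => by field_simp; ring)
  calc ψ (fun ω => Y ω + Z ω)
      ≤ t * ψ (fun ω => Y ω + t⁻¹ * Z ω) + (1 - t) * ψ Y := hsplit
    _ ≤ t * ((1 / 2) * ψ (fun ω => 2 * Y ω)) + (1 - t) * ψ Y := by gcongr
    _ = ψ Y + t * ((1 / 2) * ψ (fun ω => 2 * Y ω) - ψ Y) := by ring

theorem le_of_forall_smul_abs_sub_eq_zero (hS : IsSolidSpace μ S) (hψ : IsMCOn μ S ψ)
    {X Y : Ω → ℝ} (hX : X ∈ S) (hY : Y ∈ S)
    (hzero : ∀ α : ℝ, 0 < α → ψ (fun ω => α * |X ω - Y ω|) = 0) :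
    ψ X ≤ ψ Y := by
  have hdom : ψ X ≤ ψ (fun ω => Y ω + |X ω - Y ω|) :=
    hψ.mono X hX _ (hS.add Y hY _ (hS.abs_sub_mem hX hY))
      (Eventually.of_forall fun ω => by linarith [le_abs_self (X ω - Y ω)])
  exact hdom.trans (hψ.apply_add_le_of_forall_smul_eq_zero hS hY (hS.abs_sub_mem hX hY) hzero)

end IsMCOn

theorem stmt16_general (μ : Measure Ω)
    (S : Set (Ω → ℝ)) (hS : IsSolidSpace μ S)
    (ψ : (Ω → ℝ) → ℝ) (hmc : IsMCOn μ S ψ)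
    (X Y : Ω → ℝ) (hX : X ∈ S) (hY : Y ∈ S)
    (hzero : ∀ α : ℝ, 0 < α → ψ (fun ω => α * |X ω - Y ω|) = 0) :
    ψ X = ψ Y :=
  le_antisymm (hmc.le_of_forall_smul_abs_sub_eq_zero hS hX hY hzero)
    (hmc.le_of_forall_smul_abs_sub_eq_zero hS hY hX fun α hα => by
      simpa only [abs_sub_comm] using hzero α hα)

/-- if `ψ` is a finite monotone convex function on a solid space `S`
and `ψ(α|X − Y|) = 0` for all `α > 0`, then `ψ(X) = ψ(Y)`. -/
theorem stmt16 (μ : Measure Ω) [IsProbabilityMeasure μ]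
    (S : Set (Ω → ℝ)) (hS : IsSolidSpace μ S)
    (ψ : (Ω → ℝ) → ℝ) (hmc : IsMCOn μ S ψ)
    (X Y : Ω → ℝ) (hX : X ∈ S) (hY : Y ∈ S)
    (hzero : ∀ α : ℝ, 0 < α → ψ (fun ω => α * |X ω - Y ω|) = 0) :
    ψ X = ψ Y :=
  stmt16_general μ S hS ψ hmc X Y hX hY hzero

end MaxLebExt
end
end
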